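/- Let κ be an (N−2)-dimensional affine subspace of ℝ^N and let S be a nonempty finite set of hyperplanes containing κ that is closed under reflecting any member in any other member. If S has m elements, then the hyperplanes in S subdivide ℝ^N \ (union of S) into exactly 2m connected components (sectors), and consecutive hyperplanes form equal angles π/m. -/

import Mathlib

open scoped RealInnerProductSpace Real

/-- The reflection of ℝ^N in the hyperplane through `p` with unit normal `ν`. -/
noncomputable def reflMap {N : ℕ} (p ν x : EuclideanSpace ℝ (Fin N)) :
    EuclideanSpace ℝ (Fin N) :=
  x - (2 * ⟪x - p, ν⟫) • ν


lemma int_lemma (E : Set ℤ) (h0 : (0:ℤ) ∈ E)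
    (hcl : ∀ a ∈ E, ∀ b ∈ E, 2*a - b ∈ E) : ∃ d : ℤ, E = {x | d ∣ x} := by
  have hneg : ∀ b ∈ E, -b ∈ E := by
    intro b hb; simpa using hcl 0 h0 b hb
  obtain ⟨d, hd⟩ := Int.subgroup_cyclic (AddSubgroup.closure E)
  have hEG : E ⊆ (AddSubgroup.closure E : Set ℤ) := AddSubgroup.subset_closure
  set G := AddSubgroup.closure E with hG
  have hT : ∀ g ∈ G, ∀ e ∈ E, e + 2*g ∈ E ∧ e - 2*g ∈ E := by
    intro g hg
    induction hg using AddSubgroup.closure_induction with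
    | mem x hx =>
      intro e he
      constructor
      · have := hcl x hx (-e) (hneg e he); convert this using 1; ring
      · have := hneg _ (hcl x hx e he); convert this using 1; ring
    | zero => intro e he; simpa using he
    | add x y hx hy ihx ihy =>
      intro e he
      obtain ⟨h1, h2⟩ := ihx e he
      constructor
      · have := (ihy _ h1).1; convert this using 1; ring
      · have := (ihy _ h2).2; convert this using 1; ring
    | neg x hx ih =>
      intro e he
      exact ⟨by have := (ih e he).2; convert this using 1; ring,
             by have := (ih e he).1; convert this using 1; ring⟩
  refine ⟨d, ?_⟩
  have hmemG : ∀ y : ℤ, d * y ∈ G := by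
    intro y; rw [hd, AddSubgroup.mem_closure_singleton]; exact ⟨y, by simp [zsmul_eq_mul]; ring⟩
  have hGd : (G : Set ℤ) ⊆ {x | d ∣ x} := by
    intro x hx
    rw [SetLike.mem_coe, hd, AddSubgroup.mem_closure_singleton] at hx
    obtain ⟨n, hn⟩ := hx; exact ⟨n, by rw [← hn]; simp [zsmul_eq_mul]; ring⟩
  by_cases hd0 : d = 0
  · subst hd0
    apply Set.eq_of_subset_of_subset
    · intro x hx; exact hGd (hEG hx)
    · intro x hx
      simp only [Set.mem_setOf_eq, zero_dvd_iff] at hx; subst hx; exact h0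
  · have hodd : ∃ e ∈ E, ∃ t : ℤ, e = d * (2*t+1) := by
      by_contra hco
      push_neg at hco
      have hE2d : E ⊆ {x | 2*d ∣ x} := by
        intro e he
        obtain ⟨c, hc⟩ := hGd (hEG he)
        rcases Int.even_or_odd c with ⟨t, ht⟩ | ⟨t, ht⟩
        · exact ⟨t, by rw [hc, ht]; ring⟩
        · exact absurd (by rw [hc, ht]; try ring) (hco e he t)
      have hdG : d ∈ (G : Set ℤ) := by simpa using hmemG 1
      have hle : G ≤ AddSubgroup.closure {2*d} := by
        rw [hG]
        apply (AddSubgroup.closure_le _).2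
        intro e he
        obtain ⟨c, hc⟩ := hE2d he
        rw [SetLike.mem_coe, AddSubgroup.mem_closure_singleton]
        exact ⟨c, by rw [hc]; simp [zsmul_eq_mul]; ring⟩
      have hx2 := hle hdG
      rw [AddSubgroup.mem_closure_singleton] at hx2
      obtain ⟨c, hc⟩ := hx2
      have hc' : c * (2*d) = d := by simpa [zsmul_eq_mul] using hc
      have : d * (2 * c - 1) = 0 := by linear_combination hc'
      rcases mul_eq_zero.1 this with h | h
      · exact hd0 h
      · omega
    obtain ⟨e0, he0, t0, ht0⟩ := hodd
    have hdE : d ∈ E := by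
      have heq : d = e0 - 2*(d*t0) := by rw [ht0]; ring
      rw [heq]
      exact (hT (d*t0) (hmemG t0) e0 he0).2
    apply Set.eq_of_subset_of_subset
    · intro x hx; exact hGd (hEG hx)
    · intro x hx
      obtain ⟨c, hc⟩ := hx
      rcases Int.even_or_odd c with ⟨t, ht⟩ | ⟨t, ht⟩
      · have := (hT (d*t) (hmemG t) 0 h0).1
        convert this using 1; rw [hc, ht]; ring
      · have := (hT (d*t) (hmemG t) d hdE).1
        convert this using 1; rw [hc, ht]; ring

set_option maxHeartbeats 1000000 in
lemma circle_lemma {p : ℝ} (hp : 0 < p) (A : Set (AddCircle p)) (hfin : A.Finite)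
    {m : ℕ} (hm : 1 ≤ m) (hcard : A.ncard = m) {a₀ : AddCircle p} (ha₀ : a₀ ∈ A)
    (hcl : ∀ a ∈ A, ∀ b ∈ A, a + a - b ∈ A) :
    A = (fun k : ℕ => a₀ + ((k * (p/m) : ℝ) : AddCircle p)) '' (Set.Iio m) ∧
    Set.InjOn (fun k : ℕ => a₀ + ((k * (p/m) : ℝ) : AddCircle p)) (Set.Iio m) := by
  classical
  set D : Set (AddCircle p) := (fun x => -a₀ + x) '' A with hD
  have hDfin : D.Finite := hfin.image _
  have hDcard : D.ncard = m := by
    rw [hD, Set.ncard_image_of_injective _ (add_right_injective _)]; exact hcard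
  have h0D : (0 : AddCircle p) ∈ D := ⟨a₀, ha₀, by simp⟩
  have hclD : ∀ a ∈ D, ∀ b ∈ D, a + a - b ∈ D := by
    rintro _ ⟨a, ha, rfl⟩ _ ⟨b, hb, rfl⟩
    exact ⟨a + a - b, hcl a ha b hb, by beta_reduce; abel⟩
  have hford : ∀ d ∈ D, IsOfFinAddOrder d := by
    intro d hd
    have hpow : ∀ k : ℕ, (2^k : ℕ) • d ∈ D := by
      intro k
      induction k with
      | zero => simpa using hd
      | succ k ih =>
        have h2 : ((2:ℕ)^(k+1)) = 2^k + 2^k := by rw [pow_succ]; omega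
        rw [h2, add_smul]
        simpa using hclD _ ih _ h0D
    have key : ∀ a b : ℕ, a < b → (2:ℕ)^a • d = 2^b • d → IsOfFinAddOrder d := by
      intro a b hab he
      have hlt : (2:ℕ)^a < 2^b := Nat.pow_lt_pow_right one_lt_two hab
      refine isOfFinAddOrder_iff_nsmul_eq_zero.2 ⟨2^b - 2^a, by omega, ?_⟩
      have h1 : (2^b - 2^a) + 2^a = 2^b := by omega
      have h2 : ((2^b - 2^a) : ℕ) • d + 2^a • d = 2^a • d := by
        rw [← add_smul, h1, ← he]
      exact add_right_cancel (h2.trans (zero_add ((2:ℕ)^a • d)).symm)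
    obtain ⟨k, -, l, -, hkl, heq⟩ :=
      Set.infinite_univ.exists_ne_map_eq_of_mapsTo
        (Set.mapsTo_univ_iff.2 fun k : ℕ => hpow k) hDfin
    rcases Ne.lt_or_gt hkl with h | h
    · exact key k l h heq
    · exact key l k h heq.symm
  -- a common order n for all elements of D
  classical
  set n : ℕ := hDfin.toFinset.lcm addOrderOf with hn
  have hdvd : ∀ d ∈ D, addOrderOf d ∣ n :=
    fun d hd => Finset.dvd_lcm (hDfin.mem_toFinset.2 hd)
  have hn0 : n ≠ 0 := by
    rw [hn, Ne, Finset.lcm_eq_zero_iff]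
    rintro ⟨d, hd, h0⟩
    exact (hford d (hDfin.mem_toFinset.1 hd)).addOrderOf_pos.ne' h0
  have hnsmul : ∀ d ∈ D, (n:ℕ) • d = 0 :=
    fun d hd => addOrderOf_dvd_iff_nsmul_eq_zero.1 (hdvd d hd)
  set φ : ℤ → AddCircle p := fun k => ((k * (p/n) : ℝ) : AddCircle p) with hφ
  have hφ0 : φ 0 = 0 := by
    simp only [hφ, Int.cast_zero, zero_mul]
    norm_cast
  have hφhom : ∀ a b : ℤ, φ (2*a - b) = φ a + φ a - φ b := by
    intro a b
    simp only [hφ]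
    rw [show ((2*a - b : ℤ) : ℝ) * (p/n) =
      ((a:ℝ)*(p/n) + (a:ℝ)*(p/n)) - (b:ℝ)*(p/n) by push_cast; ring]
    norm_cast
  have hsmulcast : ∀ (k : ℕ) (r : ℝ), (k:ℕ) • (r : AddCircle p) = ((k * r : ℝ) : AddCircle p) := by
    intro k r
    induction k with
    | zero => simp
    | succ k ih =>
      rw [succ_nsmul, ih, show (((k+1:ℕ)):ℝ) * r = (k:ℝ)*r + r by push_cast; ring]
      norm_cast
  have hzsmulp : ∀ z : ℤ, ((z * p : ℝ) : AddCircle p) = 0 := by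
    intro z
    rw [AddCircle.coe_eq_zero_iff]
    exact ⟨z, by rw [zsmul_eq_mul]⟩
  have hDrange : ∀ x ∈ D, ∃ k : ℤ, φ k = x := by
    intro x hx
    obtain ⟨r, rfl⟩ := QuotientAddGroup.mk_surjective x
    have h1 : ((n * r : ℝ) : AddCircle p) = 0 := by
      rw [← hsmulcast n r]
      exact hnsmul _ hx
    obtain ⟨z, hz⟩ := (AddCircle.coe_eq_zero_iff p).1 h1
    rw [zsmul_eq_mul] at hz
    refine ⟨z, ?_⟩
    simp only [hφ]
    congr 1
    have hnne : (n:ℝ) ≠ 0 := Nat.cast_ne_zero.2 hn0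
    field_simp
    linarith [hz]
  obtain ⟨d, hEd⟩ := int_lemma (φ ⁻¹' D)
    (by simp only [Set.mem_preimage, hφ0]; exact h0D)
    (by intro a ha b hb
        simp only [Set.mem_preimage] at *
        rw [hφhom]
        exact hclD _ ha _ hb)
  set d' : ℕ := d.natAbs with hd'
  have hEd' : φ ⁻¹' D = {x : ℤ | (d':ℤ) ∣ x} := by
    rw [hEd]; ext x; exact (Int.natAbs_dvd).symm
  have hnE : (n:ℤ) ∈ φ ⁻¹' D := by
    simp only [Set.mem_preimage, hφ]
    have : ((n:ℤ):ℝ) * (p/n) = p := by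
      have hnne : (n:ℝ) ≠ 0 := Nat.cast_ne_zero.2 hn0
      push_cast
      field_simp
    rw [this, AddCircle.coe_period]
    exact h0D
  have hd'n : d' ∣ n := by
    have h2 := hEd' ▸ hnE
    exact Int.natCast_dvd_natCast.1 h2
  have hd'0 : d' ≠ 0 := by
    intro h
    rw [hEd', h] at hnE
    simp only [Set.mem_setOf_eq, Int.natCast_zero, zero_dvd_iff, Int.natCast_eq_zero] at hnE
    exact hn0 hnE
  set m' : ℕ := n / d' with hm'
  have hdm' : d' * m' = n := Nat.mul_div_cancel' hd'n
  have hm'0 : m' ≠ 0 := by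
    intro h
    rw [h, Nat.mul_zero] at hdm'
    exact hn0 hdm'.symm
  have hm'ne : (m':ℝ) ≠ 0 := Nat.cast_ne_zero.2 hm'0
  have hd'ne : (d':ℝ) ≠ 0 := Nat.cast_ne_zero.2 hd'0
  have hkey : (d' : ℝ) * (p/n) = p/m' := by
    rw [← hdm']
    push_cast
    field_simp
  have hDeq : D = (fun k : ℕ => ((k * (p/m') : ℝ) : AddCircle p)) '' (Set.Iio m') := by
    apply Set.eq_of_subset_of_subset
    · intro x hx
      obtain ⟨k, hk⟩ := hDrange x hx
      have hkE : k ∈ φ ⁻¹' D := by simp only [Set.mem_preimage, hk]; exact hx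
      rw [hEd'] at hkE
      obtain ⟨t, rfl⟩ := hkE
      set r : ℤ := t % m' with hr
      have hr0 : 0 ≤ r := Int.emod_nonneg t (by exact_mod_cast hm'0)
      have hrlt : r < m' := Int.emod_lt_of_pos t (by positivity)
      set q : ℤ := t / (m':ℤ) with hq
      have htz : r + (m':ℤ) * q = t := Int.emod_add_mul_ediv t (m':ℤ)
      have hchain : φ (↑d' * t) = (((r.toNat:ℝ) * (p/m') : ℝ) : AddCircle p) := by
        simp only [hφ]
        have e1 : ((d' * t : ℤ):ℝ) * (p/n) = (t:ℝ) * ((d':ℝ) * (p/n)) := by push_cast; ring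
        rw [e1, hkey]
        have e2 : (t:ℝ) * (p/m') = (r.toNat:ℝ) * (p/m') + (q:ℝ) * p := by
          have hrr : ((r.toNat:ℝ)) = (r:ℝ) := by exact_mod_cast Int.toNat_of_nonneg hr0
          have htr : (t:ℝ) = (r:ℝ) + (m':ℝ) * q := by exact_mod_cast htz.symm
          rw [hrr, htr]
          field_simp
        rw [e2]
        rw [show (((r.toNat:ℝ) * (p/m') + (q:ℝ) * p : ℝ) : AddCircle p)
            = (((r.toNat:ℝ) * (p/m') : ℝ) : AddCircle p) + (((q:ℝ) * p : ℝ) : AddCircle p) by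
              norm_cast,
          hzsmulp, add_zero]
      refine ⟨r.toNat, by simp only [Set.mem_Iio]; omega, ?_⟩
      simp only []
      rw [← hk, hchain]
    · rintro x ⟨k, hk, rfl⟩
      have : ((d' * k : ℤ)) ∈ φ ⁻¹' D := by
        rw [hEd']
        exact ⟨k, by push_cast; ring⟩
      simp only [Set.mem_preimage, hφ] at this
      convert this using 2
      push_cast
      rw [← hkey]
      ring
  have hinj : Set.InjOn (fun k : ℕ => ((k * (p/m') : ℝ) : AddCircle p)) (Set.Iio m') := by
    intro k1 h1 k2 h2 he
    simp only at he
    have hsub : ((((k1:ℝ) - k2) * (p/m') : ℝ) : AddCircle p) = 0 := by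
      rw [show (((((k1:ℝ) - k2) * (p/m')) : ℝ) : AddCircle p)
          = (((k1:ℝ) * (p/m') : ℝ) : AddCircle p) - (((k2:ℝ) * (p/m') : ℝ) : AddCircle p) by
            rw [show ((k1:ℝ) - k2) * (p/m') = (k1:ℝ) * (p/m') - (k2:ℝ) * (p/m') by ring]
            norm_cast,
        sub_eq_zero]
      exact_mod_cast he
    obtain ⟨z, hz⟩ := (AddCircle.coe_eq_zero_iff p).1 hsub
    rw [zsmul_eq_mul] at hz
    have hzz : (z:ℝ) * m' = (k1:ℝ) - k2 := by
      have h3 : (z:ℝ) * p * m' = ((k1:ℝ) - k2) * p := by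
        field_simp at hz
        linear_combination p * hz
      have h4 : (z:ℝ) * m' * p = ((k1:ℝ) - k2) * p := by
        rw [show (z:ℝ) * m' * p = (z:ℝ) * p * m' by ring]
        exact h3
      exact mul_right_cancel₀ hp.ne' h4
    have hzzz : z * m' = (k1:ℤ) - k2 := by exact_mod_cast hzz
    simp only [Set.mem_Iio] at h1 h2
    have : z = 0 := by
      rcases lt_trichotomy z 0 with h | h | h
      · nlinarith [hzzz]
      · exact h
      · nlinarith [hzzz]
    rw [this, zero_mul] at hzzz
    omega
  have hm'm : m' = m := by
    have : D.ncard = m' := by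
      rw [hDeq, Set.ncard_image_of_injOn hinj,
        show (Set.Iio m') = ↑(Finset.range m') from (Finset.coe_range m').symm,
        Set.ncard_coe_finset, Finset.card_range]
    omega
  rw [hm'm] at hDeq hinj
  have hA : A = (fun x => a₀ + x) '' D := by
    rw [hD, Set.image_image]
    simp
  constructor
  · rw [hA, hDeq, Set.image_image]
  · intro k1 h1 k2 h2 he
    simp only at he
    exact hinj h1 h2 (by exact add_left_cancel he)

lemma sin_pos_iff' (x : ℝ) : 0 < Real.sin x ↔ ∃ t : ℤ, 2*π*t < x ∧ x < 2*π*t + π := by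
  constructor
  · intro hx
    set t : ℤ := ⌊x / (2*π)⌋ with ht
    have h2π : 0 < 2*π := by positivity
    have h1 : 2*π*t ≤ x := by
      have := Int.floor_le (x / (2*π))
      calc 2*π*t ≤ 2*π * (x / (2*π)) := by
            apply mul_le_mul_of_nonneg_left this h2π.le
        _ = x := by field_simp
    have h2 : x < 2*π*t + 2*π := by
      have := Int.lt_floor_add_one (x / (2*π))
      have h3 : x / (2*π) < t + 1 := this
      calc x = 2*π * (x / (2*π)) := by field_simp
        _ < 2*π * (t+1) := by apply mul_lt_mul_of_pos_left h3 h2π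
        _ = 2*π*t + 2*π := by ring
    set y : ℝ := x - 2*π*t with hy
    have hsy : Real.sin y = Real.sin x := by
      rw [hy, show x - 2*π*t = x + ((-t : ℤ) : ℝ) * (2*π) by push_cast; ring,
        Real.sin_add_int_mul_two_pi]
    refine ⟨t, ?_, ?_⟩
    · rcases eq_or_lt_of_le h1 with h | h
      · exfalso
        have hz : Real.sin x = 0 := by
          rw [← h, show 2*π*((t:ℤ):ℝ) = 0 + ((t:ℤ):ℝ)*(2*π) by ring,
            Real.sin_add_int_mul_two_pi, Real.sin_zero]
        linarith
      · exact h
    · by_contra hc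
      push_neg at hc
      have hyπ : π ≤ y := by rw [hy]; linarith
      have hy2π : y < 2*π := by rw [hy]; linarith
      have : Real.sin y ≤ 0 := by
        have h5 : Real.sin y = - Real.sin (y - π) := by
          rw [show y = (y - π) + π by ring, Real.sin_add_pi]; ring
        rw [h5, neg_nonpos]
        apply Real.sin_nonneg_of_nonneg_of_le_pi <;> linarith
      linarith [hsy ▸ this]
  · rintro ⟨t, h1, h2⟩
    have : Real.sin (x - 2*π*t) = Real.sin x := by
      rw [show x - 2*π*t = x + ((-t : ℤ) : ℝ) * (2*π) by push_cast; ring,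
        Real.sin_add_int_mul_two_pi]
    rw [← this]
    apply Real.sin_pos_of_pos_of_lt_pi <;> linarith

lemma sin_neg_iff' (x : ℝ) : Real.sin x < 0 ↔ ∃ t : ℤ, 2*π*t - π < x ∧ x < 2*π*t := by
  have := sin_pos_iff' (-x)
  rw [Real.sin_neg] at this
  constructor
  · intro hx
    obtain ⟨t, h1, h2⟩ := this.1 (by linarith)
    exact ⟨-t, by push_cast; constructor <;> linarith⟩
  · rintro ⟨t, h1, h2⟩
    have h3 : -Real.sin x > 0 := this.2 ⟨-t, by push_cast; constructor <;> linarith⟩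
    linarith

lemma sector_core {m : ℕ} (hm : 1 ≤ m) (u : ℝ) (j : ℝ) :
    (0 < Real.sin ((u - j) * π / m) ∧ Real.sin ((u - j - 1) * π / m) < 0) ↔
    ∃ t : ℤ, 2*m*t < u - j ∧ u - j < 2*m*t + 1 := by
  have hm0 : (0:ℝ) < m := by exact_mod_cast hm
  have hπ : (0:ℝ) < π := Real.pi_pos
  constructor
  · rintro ⟨h1, h2⟩
    obtain ⟨t, ht1, ht2⟩ := (sin_pos_iff' _).1 h1
    obtain ⟨s, hs1, hs2⟩ := (sin_neg_iff' _).1 h2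
    -- convert to: 2mt < u-j < 2mt+m ; 2ms - m < u-j-1 < 2ms   (after scaling by m/π)
    have ht1' : 2*(m:ℝ)*t < u - j := by
      have := (mul_lt_mul_iff_of_pos_right (by positivity : (0:ℝ) < m / π)).2 ht1
      rw [show 2*π*(t:ℝ) * (m/π) = 2*m*t by field_simp,
        show (u - j) * π / m * (m/π) = u - j by field_simp] at this
      exact this
    have ht2' : u - j < 2*(m:ℝ)*t + m := by
      have := (mul_lt_mul_iff_of_pos_right (by positivity : (0:ℝ) < m / π)).2 ht2
      rw [show (2*π*(t:ℝ) + π) * (m/π) = 2*m*t + m by field_simp,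
        show (u - j) * π / m * (m/π) = u - j by field_simp] at this
      exact this
    have hs1' : 2*(m:ℝ)*s - m < u - j - 1 := by
      have := (mul_lt_mul_iff_of_pos_right (by positivity : (0:ℝ) < m / π)).2 hs1
      rw [show (2*π*(s:ℝ) - π) * (m/π) = 2*m*s - m by field_simp,
        show (u - j - 1) * π / m * (m/π) = u - j - 1 by field_simp] at this
      exact this
    have hs2' : u - j - 1 < 2*(m:ℝ)*s := by
      have := (mul_lt_mul_iff_of_pos_right (by positivity : (0:ℝ) < m / π)).2 hs2
      rw [show 2*π*(s:ℝ) * (m/π) = 2*m*s by field_simp,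
        show (u - j - 1) * π / m * (m/π) = u - j - 1 by field_simp] at this
      exact this
    -- now s = t
    have hst : s = t := by
      have hint1 : 2*(m:ℤ)*(t-s) < 1 := by
        have : (2*(m:ℤ)*(t-s) : ℝ) < 1 := by push_cast; nlinarith
        exact_mod_cast this
      have hint2 : 2*(m:ℤ)*(s-t) < 2*m := by
        have : (2*(m:ℤ)*(s-t) : ℝ) < 2*m := by push_cast; nlinarith
        exact_mod_cast this
      have hmZ : 1 ≤ (m:ℤ) := by exact_mod_cast hm
      nlinarith [hint1, hint2]
    refine ⟨t, ht1', ?_⟩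
    rw [hst] at hs2'
    linarith
  · rintro ⟨t, h1, h2⟩
    have hmm : (1:ℝ) ≤ m := by exact_mod_cast hm
    constructor
    · apply (sin_pos_iff' _).2
      refine ⟨t, ?_, ?_⟩
      · have : 2*(m:ℝ)*t * (π/m) < (u - j) * (π/m) := by
          apply mul_lt_mul_of_pos_right h1 (by positivity)
        rw [show 2*(m:ℝ)*t * (π/m) = 2*π*t by field_simp] at this
        rw [show (u-j) * (π/m) = (u-j)*π/m by ring] at this
        exact this
      · have h3 : u - j < 2*(m:ℝ)*t + m := by linarith
        have : (u - j) * (π/m) < (2*(m:ℝ)*t + m) * (π/m) := by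
          apply mul_lt_mul_of_pos_right h3 (by positivity)
        rw [show (2*(m:ℝ)*t + m) * (π/m) = 2*π*t + π by field_simp] at this
        rw [show (u-j) * (π/m) = (u-j)*π/m by ring] at this
        exact this
    · apply (sin_neg_iff' _).2
      refine ⟨t, ?_, ?_⟩
      · have h3 : 2*(m:ℝ)*t - m < u - j - 1 := by linarith
        have : (2*(m:ℝ)*t - m) * (π/m) < (u - j - 1) * (π/m) := by
          apply mul_lt_mul_of_pos_right h3 (by positivity)
        rw [show (2*(m:ℝ)*t - m) * (π/m) = 2*π*t - π by field_simp] at this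
        rw [show (u-j-1) * (π/m) = (u-j-1)*π/m by ring] at this
        exact this
      · have h3 : u - j - 1 < 2*(m:ℝ)*t := by linarith
        have : (u - j - 1) * (π/m) < (2*(m:ℝ)*t) * (π/m) := by
          apply mul_lt_mul_of_pos_right h3 (by positivity)
        rw [show (2*(m:ℝ)*t) * (π/m) = 2*π*t by field_simp] at this
        rw [show (u-j-1) * (π/m) = (u-j-1)*π/m by ring] at this
        exact this

lemma unique_sector {m : ℕ} (hm : 1 ≤ m) (u : ℝ) (hu : ∀ z : ℤ, u ≠ z) :
    ∃! j : ℕ, j < 2*m ∧ ∃ t : ℤ, 2*(m:ℝ)*t < u - j ∧ u - j < 2*(m:ℝ)*t + 1 := by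
  have hm2 : 0 < 2*m := by omega
  set J : ℤ := ⌊u⌋ with hJ
  have hfr : (J:ℝ) < u := by
    rcases lt_or_eq_of_le (Int.floor_le u) with h | h
    · exact h
    · exact absurd h.symm (hu J)
  have hfr2 : u < J + 1 := Int.lt_floor_add_one u
  have hmod0 : 0 ≤ J % (2*m) := Int.emod_nonneg J (by exact_mod_cast hm2.ne')
  have hmodlt : J % (2*m) < 2*m := Int.emod_lt_of_pos J (by exact_mod_cast hm2)
  have hsum : J % (2*m) + (2*m) * (J / (2*m)) = J := Int.emod_add_mul_ediv J (2*m)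
  have hnatc : ((J % (2*m)).toNat : ℝ) = ((J % (2*m) : ℤ) : ℝ) := by
    exact_mod_cast Int.toNat_of_nonneg hmod0
  have hsumR : ((J % (2*m) : ℤ):ℝ) + (2*(m:ℝ))*((J/(2*(m:ℤ)) : ℤ):ℝ) = (J:ℝ) := by
    exact_mod_cast hsum
  refine ⟨(J % (2*m)).toNat, ⟨by omega, ⟨J / (2*m), ?_, ?_⟩⟩, ?_⟩
  · rw [hnatc]; linarith
  · rw [hnatc]; linarith
  · rintro j' ⟨hj', t', h1, h2⟩
    have hfloor : J = 2*m*t' + j' := by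
      rw [hJ]
      apply Int.floor_eq_iff.2
      constructor
      · push_cast; linarith
      · push_cast; linarith
    have hJ' : J % (2*m) = j' := by
      rw [hfloor, show (2*(m:ℤ)*t' + j') = (j' : ℤ) + (2*m) * t' by ring,
        Int.add_mul_emod_self_left, Int.emod_eq_of_lt (by positivity) (by exact_mod_cast hj')]
    omega

section Nu
variable {N : ℕ} (e₁ e₂ : EuclideanSpace ℝ (Fin N))

noncomputable def nuv (t : ℝ) : EuclideanSpace ℝ (Fin N) :=
  Real.cos t • e₁ + Real.sin t • e₂

lemma nuv_inner_left (w : EuclideanSpace ℝ (Fin N)) (t : ℝ) :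
    ⟪nuv e₁ e₂ t, w⟫ = Real.cos t * ⟪e₁, w⟫ + Real.sin t * ⟪e₂, w⟫ := by
  simp only [nuv, inner_add_left, real_inner_smul_left]

variable (h1 : ‖e₁‖ = 1) (h2 : ‖e₂‖ = 1) (h12 : ⟪e₁, e₂⟫ = 0)

include h1 h2 h12 in
lemma nuv_inner (s t : ℝ) : ⟪nuv e₁ e₂ s, nuv e₁ e₂ t⟫ = Real.cos (s - t) := by
  have hc : ⟪e₂, e₁⟫ = 0 := by rw [real_inner_comm]; exact h12
  simp only [nuv, inner_add_left, inner_add_right, real_inner_smul_left, real_inner_smul_right,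
    h12, hc, real_inner_self_eq_norm_mul_norm, h1, h2]
  rw [Real.cos_sub]; ring

include h1 h2 h12 in
lemma nuv_norm (t : ℝ) : ‖nuv e₁ e₂ t‖ = 1 := by
  have h := nuv_inner e₁ e₂ h1 h2 h12 t t
  rw [sub_self, Real.cos_zero, real_inner_self_eq_norm_mul_norm] at h
  nlinarith [norm_nonneg (nuv e₁ e₂ t)]

lemma nuv_add_pi (t : ℝ) : nuv e₁ e₂ (t + π) = - nuv e₁ e₂ t := by
  simp [nuv, Real.cos_add_pi, Real.sin_add_pi]; module

lemma nuv_add_two_pi (t : ℝ) (z : ℤ) : nuv e₁ e₂ (t + z * (2*π)) = nuv e₁ e₂ t := by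
  simp [nuv, Real.cos_add_int_mul_two_pi, Real.sin_add_int_mul_two_pi]

lemma nuv_add_int_pi (t : ℝ) (z : ℤ) :
    nuv e₁ e₂ (t + z * π) = nuv e₁ e₂ t ∨ nuv e₁ e₂ (t + z * π) = - nuv e₁ e₂ t := by
  rcases Int.even_or_odd z with ⟨w, hw⟩ | ⟨w, hw⟩
  · left
    rw [show t + (z:ℝ) * π = t + w * (2*π) by rw [hw]; push_cast; ring, nuv_add_two_pi]
  · right
    rw [show t + (z:ℝ) * π = (t + π) + w * (2*π) by rw [hw]; push_cast; ring, nuv_add_two_pi,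
      nuv_add_pi]

lemma angle_eq_of_cos_sin {θ θ' : ℝ} (hc : Real.cos θ' = Real.cos θ)
    (hs : Real.sin θ' = Real.sin θ) : ∃ z : ℤ, θ' = θ + z * (2*π) := by
  have he : Complex.exp (θ' * Complex.I) = Complex.exp (θ * Complex.I) := by
    rw [Complex.exp_mul_I, Complex.exp_mul_I, ← Complex.ofReal_cos, ← Complex.ofReal_cos,
      ← Complex.ofReal_sin, ← Complex.ofReal_sin, hc, hs]
  obtain ⟨z, hz⟩ := Complex.exp_eq_exp_iff_exists_int.1 he
  refine ⟨z, ?_⟩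
  have : ((θ' : ℂ) - θ - z * (2*π)) * Complex.I = 0 := by
    rw [sub_mul, sub_mul, hz]; ring
  rcases mul_eq_zero.1 this with h | h
  · have : (θ' : ℂ) = θ + z * (2*π) := by
      have := sub_eq_zero.1 (by linear_combination h : ((θ' : ℂ) - (θ + z * (2*π))) = 0)
      exact this
    exact_mod_cast this
  · exact absurd h Complex.I_ne_zero

include h1 h2 h12 in
lemma nuv_coord1 (t : ℝ) : ⟪e₁, nuv e₁ e₂ t⟫ = Real.cos t := by
  have hc : ⟪e₂, e₁⟫ = 0 := by rw [real_inner_comm]; exact h12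
  simp only [nuv, inner_add_right, real_inner_smul_right, h12, hc,
    real_inner_self_eq_norm_mul_norm, h1, h2]
  ring

include h1 h2 h12 in
lemma nuv_coord2 (t : ℝ) : ⟪e₂, nuv e₁ e₂ t⟫ = Real.sin t := by
  have hc : ⟪e₂, e₁⟫ = 0 := by rw [real_inner_comm]; exact h12
  simp only [nuv, inner_add_right, real_inner_smul_right, h12, hc,
    real_inner_self_eq_norm_mul_norm, h1, h2]
  ring

include h1 h2 h12 in
lemma nuv_eq_iff {θ θ' : ℝ} (h : nuv e₁ e₂ θ' = nuv e₁ e₂ θ) : ∃ z : ℤ, θ' = θ + z * (2*π) := by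
  apply angle_eq_of_cos_sin
  · rw [← nuv_coord1 e₁ e₂ h1 h2 h12, ← nuv_coord1 e₁ e₂ h1 h2 h12, h]
  · rw [← nuv_coord2 e₁ e₂ h1 h2 h12, ← nuv_coord2 e₁ e₂ h1 h2 h12, h]

/-- existence of an angle for a unit vector in the plane spanned by e₁ e₂ -/
lemma exists_angle {c₁ c₂ : ℝ} (h : c₁^2 + c₂^2 = 1) :
    ∃ θ : ℝ, Real.cos θ = c₁ ∧ Real.sin θ = c₂ := by
  have hc1 : -1 ≤ c₁ ∧ c₁ ≤ 1 := by constructor <;> nlinarith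
  rcases le_or_gt 0 c₂ with h2 | h2
  · refine ⟨Real.arccos c₁, Real.cos_arccos hc1.1 hc1.2, ?_⟩
    rw [Real.sin_arccos, show 1 - c₁^2 = c₂^2 by linarith, Real.sqrt_sq h2]
  · refine ⟨-Real.arccos c₁, by rw [Real.cos_neg]; exact Real.cos_arccos hc1.1 hc1.2, ?_⟩
    rw [Real.sin_neg, Real.sin_arccos, show 1 - c₁^2 = c₂^2 by linarith,
      show c₂^2 = (-c₂)^2 by ring, Real.sqrt_sq (by linarith)]
    ring

lemma exists_polar {c₁ c₂ : ℝ} (h : ¬ (c₁ = 0 ∧ c₂ = 0)) :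
    ∃ r α : ℝ, 0 < r ∧ r * Real.cos α = c₁ ∧ r * Real.sin α = c₂ := by
  set r : ℝ := Real.sqrt (c₁^2 + c₂^2) with hr
  have hne : c₁^2 + c₂^2 ≠ 0 := fun hc => h ⟨by nlinarith, by nlinarith⟩
  have hr0 : 0 < r := Real.sqrt_pos.2 (lt_of_le_of_ne (by positivity) (Ne.symm hne))
  have hr2 : r^2 = c₁^2 + c₂^2 := Real.sq_sqrt (by positivity)
  have hsq : (c₁/r)^2 + (c₂/r)^2 = 1 := by
    rw [div_pow, div_pow, ← add_div, hr2, div_self hne]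
  obtain ⟨θ, hc, hs⟩ := exists_angle hsq
  refine ⟨r, θ, hr0, ?_, ?_⟩
  · rw [hc]; field_simp
  · rw [hs]; field_simp

end Nu

section Refl
variable {N : ℕ}

/-- The reflection of ℝ^N in the hyperplane through `p` with unit normal `ν`. -/
noncomputable def reflMap' (p ν x : EuclideanSpace ℝ (Fin N)) :
    EuclideanSpace ℝ (Fin N) :=
  x - (2 * ⟪x - p, ν⟫) • ν

noncomputable def reflLin (ν : EuclideanSpace ℝ (Fin N)) :
    EuclideanSpace ℝ (Fin N) →ₗ[ℝ] EuclideanSpace ℝ (Fin N) where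
  toFun := fun v => v - (2 * ⟪v, ν⟫) • ν
  map_add' := by
    intro v w
    simp only [inner_add_left]
    module
  map_smul' := by
    intro c v
    simp only [real_inner_smul_left, RingHom.id_apply]
    module

noncomputable def reflAff (p ν : EuclideanSpace ℝ (Fin N)) :
    (EuclideanSpace ℝ (Fin N)) →ᵃ[ℝ] EuclideanSpace ℝ (Fin N) where
  toFun := reflMap' p ν
  linear := reflLin ν
  map_vadd' := by
    intro x v
    simp only [reflMap', reflLin, vadd_eq_add, LinearMap.coe_mk, AddHom.coe_mk]
    rw [show v + x - p = v + (x - p) by abel, inner_add_left]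
    module

lemma reflAff_apply (p ν x : EuclideanSpace ℝ (Fin N)) : reflAff p ν x = reflMap' p ν x := rfl

lemma reflAff_linear (p ν : EuclideanSpace ℝ (Fin N)) : (reflAff p ν).linear = reflLin ν := rfl

lemma reflLin_inner {ν : EuclideanSpace ℝ (Fin N)} (hν : ‖ν‖ = 1)
    (v w : EuclideanSpace ℝ (Fin N)) : ⟪reflLin ν v, reflLin ν w⟫ = ⟪v, w⟫ := by
  simp only [reflLin, LinearMap.coe_mk, AddHom.coe_mk, inner_sub_left, inner_sub_right,
    real_inner_smul_left, real_inner_smul_right, real_inner_self_eq_norm_mul_norm, hν]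
  rw [real_inner_comm w ν]
  ring

variable (e₁ e₂ : EuclideanSpace ℝ (Fin N)) (h1 : ‖e₁‖ = 1) (h2 : ‖e₂‖ = 1) (h12 : ⟪e₁, e₂⟫ = 0)

include h1 h2 h12 in
lemma reflLin_nuv (θ θ' : ℝ) :
    reflLin (nuv e₁ e₂ θ) (nuv e₁ e₂ θ') = nuv e₁ e₂ (2*θ - θ' + π) := by
  have hc : Real.cos (2*θ - θ' + π) = Real.cos θ' - 2 * Real.cos (θ' - θ) * Real.cos θ := by
    rw [Real.cos_add_pi, show 2*θ - θ' = θ - (θ' - θ) by ring, Real.cos_sub]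
    conv_rhs => rw [show θ' = (θ' - θ) + θ by ring]
    rw [Real.cos_add]
    ring
  have hs : Real.sin (2*θ - θ' + π) = Real.sin θ' - 2 * Real.cos (θ' - θ) * Real.sin θ := by
    rw [Real.sin_add_pi, show 2*θ - θ' = θ - (θ' - θ) by ring, Real.sin_sub]
    conv_rhs => rw [show θ' = (θ' - θ) + θ by ring]
    rw [Real.sin_add]
    ring
  show nuv e₁ e₂ θ' - (2 * ⟪nuv e₁ e₂ θ', nuv e₁ e₂ θ⟫) • nuv e₁ e₂ θ = _
  rw [nuv_inner e₁ e₂ h1 h2 h12]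
  simp only [nuv, hc, hs]
  module

end Refl

set_option maxHeartbeats 2000000 in
/-- a nonempty finite set `S` of `m` hyperplanes through a common
`(N−2)`-dimensional affine subspace `κ`, closed under reflecting any member in any other,
subdivides the complement of their union into exactly `2m` connected components, and the
hyperplanes are equally spaced in angle: their normals are
`cos(θ₀ + kπ/m)e₁ + sin(θ₀ + kπ/m)e₂` for an orthonormal pair `e₁, e₂` normal to `κ`. -/
theorem stmt3 {N : ℕ} (hN : 2 ≤ N) (m : ℕ) (hm : 1 ≤ m)
    (κ : AffineSubspace ℝ (EuclideanSpace ℝ (Fin N)))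
    (hκne : (κ : Set (EuclideanSpace ℝ (Fin N))).Nonempty)
    (hκdim : Module.finrank ℝ κ.direction = N - 2)
    (S : Set (AffineSubspace ℝ (EuclideanSpace ℝ (Fin N))))
    (hhyp : ∀ Pl ∈ S, κ ≤ Pl ∧ Module.finrank ℝ Pl.direction = N - 1)
    (hrefl : ∀ Pl ∈ S, ∀ Pl' ∈ S, ∀ p ν : EuclideanSpace ℝ (Fin N),
      p ∈ Pl → ν ∈ Pl.directionᗮ → ‖ν‖ = 1 →
      ∃ Pl'' ∈ S, reflMap p ν '' (Pl' : Set (EuclideanSpace ℝ (Fin N))) =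
        (Pl'' : Set (EuclideanSpace ℝ (Fin N))))
    (hcard : S.ncard = m) :
    Nat.card (ConnectedComponents
      {x : EuclideanSpace ℝ (Fin N) //
        x ∉ ⋃ Pl ∈ S, (Pl : Set (EuclideanSpace ℝ (Fin N)))}) = 2 * m ∧
    ∃ (e₁ e₂ : EuclideanSpace ℝ (Fin N)) (θ₀ : ℝ)
      (f : Fin m → AffineSubspace ℝ (EuclideanSpace ℝ (Fin N))),
      ‖e₁‖ = 1 ∧ ‖e₂‖ = 1 ∧ ⟪e₁, e₂⟫ = 0 ∧
      e₁ ∈ κ.directionᗮ ∧ e₂ ∈ κ.directionᗮ ∧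
      Function.Injective f ∧ (∀ k, f k ∈ S) ∧
      ∀ k : Fin m,
        (Real.cos (θ₀ + k * π / m) • e₁ + Real.sin (θ₀ + k * π / m) • e₂) ∈
          (f k).directionᗮ := by

  classical
  obtain ⟨p₀, hp₀⟩ := hκne
  have hSfin : S.Finite := by
    by_contra h
    rw [Set.Infinite.ncard h] at hcard
    omega
  have hSne : S.Nonempty := by
    rcases Set.eq_empty_or_nonempty S with h | h
    · rw [h, Set.ncard_empty] at hcard; omega
    · exact h
  have hdimV : Module.finrank ℝ κ.directionᗮ = 2 := by
    have h := Submodule.finrank_add_finrank_orthogonal (𝕜 := ℝ) κ.direction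
    rw [hκdim, finrank_euclideanSpace_fin] at h
    omega
  set B := (stdOrthonormalBasis ℝ κ.directionᗮ).reindex (finCongr (by rw [hdimV])) with hB
  set e₁ : EuclideanSpace ℝ (Fin N) := (B 0 : EuclideanSpace ℝ (Fin N)) with he₁
  set e₂ : EuclideanSpace ℝ (Fin N) := (B 1 : EuclideanSpace ℝ (Fin N)) with he₂
  have h1 : ‖e₁‖ = 1 := by
    have := B.orthonormal.1 0
    exact this
  have h2 : ‖e₂‖ = 1 := by
    have := B.orthonormal.1 1
    exact this
  have h12 : ⟪e₁, e₂⟫ = 0 := by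
    have horth := B.orthonormal.2 (show (0 : Fin 2) ≠ 1 by decide)
    rw [he₁, he₂, ← Submodule.coe_inner]
    exact horth
  have hmem1 : e₁ ∈ κ.directionᗮ := (B 0).2
  have hmem2 : e₂ ∈ κ.directionᗮ := (B 1).2
  have hspanV : ∀ v ∈ κ.directionᗮ, v = ⟪e₁, v⟫ • e₁ + ⟪e₂, v⟫ • e₂ := by
    intro v hv
    have hsum := B.sum_repr ⟨v, hv⟩
    rw [Fin.sum_univ_two] at hsum
    have hr0 := B.repr_apply_apply ⟨v, hv⟩ 0
    have hr1 := B.repr_apply_apply ⟨v, hv⟩ 1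
    have hcoe := congrArg (Subtype.val) hsum
    simp only [Submodule.coe_add, Submodule.coe_smul] at hcoe
    conv_lhs => rw [← hcoe]
    rw [hr0, hr1, Submodule.coe_inner, Submodule.coe_inner]
  have hnumem : ∀ t, nuv e₁ e₂ t ∈ κ.directionᗮ := fun t =>
    Submodule.add_mem _ (Submodule.smul_mem _ _ hmem1) (Submodule.smul_mem _ _ hmem2)
  have hnunorm : ∀ t, ‖nuv e₁ e₂ t‖ = 1 := nuv_norm e₁ e₂ h1 h2 h12
  have hnune : ∀ t, nuv e₁ e₂ t ≠ 0 := by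
    intro t h
    have := hnunorm t
    rw [h, norm_zero] at this
    norm_num at this
  have hPfacts : ∀ Pl ∈ S, Module.finrank ℝ Pl.directionᗮ = 1 ∧
      Pl.directionᗮ ≤ κ.directionᗮ ∧ p₀ ∈ Pl := by
    intro Pl hPl
    obtain ⟨hle, hdim⟩ := hhyp Pl hPl
    refine ⟨?_, Submodule.orthogonal_le (AffineSubspace.direction_le hle), hle hp₀⟩
    have h := Submodule.finrank_add_finrank_orthogonal (𝕜 := ℝ) Pl.direction
    rw [hdim, finrank_euclideanSpace_fin] at h
    omega
  have hspar : ∀ Pl ∈ S, ∀ w : EuclideanSpace ℝ (Fin N), w ≠ 0 → w ∈ Pl.directionᗮ →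
      Pl.directionᗮ = Submodule.span ℝ {w} := by
    intro Pl hPl w hw0 hw
    symm
    apply Submodule.eq_of_le_of_finrank_eq
    · rw [Submodule.span_le]; simpa using hw
    · rw [finrank_span_singleton hw0, (hPfacts Pl hPl).1]
  have hexθ : ∀ Pl ∈ S, ∃ θ : ℝ, nuv e₁ e₂ θ ∈ Pl.directionᗮ := by
    intro Pl hPl
    obtain ⟨hd1, hsubV, -⟩ := hPfacts Pl hPl
    have : Nontrivial Pl.directionᗮ := Module.nontrivial_of_finrank_pos (R := ℝ) (by omega)
    obtain ⟨v, hv⟩ := exists_ne (0 : Pl.directionᗮ)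
    have hv0 : (v : EuclideanSpace ℝ (Fin N)) ≠ 0 := fun hh => hv (Subtype.ext hh)
    set w : EuclideanSpace ℝ (Fin N) := ‖(v : EuclideanSpace ℝ (Fin N))‖⁻¹ • v with hwdef
    have hwmem : w ∈ Pl.directionᗮ := Submodule.smul_mem _ _ v.2
    have hwn : ‖w‖ = 1 := by
      rw [hwdef, norm_smul, norm_inv, norm_norm, inv_mul_cancel₀ (norm_ne_zero_iff.2 hv0)]
    have hwV : w ∈ κ.directionᗮ := hsubV hwmem
    have hcoord := hspanV w hwV
    have hww : ⟪w, w⟫ = ⟪e₁, w⟫ * ⟪e₁, w⟫ + ⟪e₂, w⟫ * ⟪e₂, w⟫ := by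
      nth_rewrite 1 [hcoord]
      rw [inner_add_left, real_inner_smul_left, real_inner_smul_left]
    have hin : ⟪w, w⟫ = 1 := by rw [real_inner_self_eq_norm_mul_norm, hwn]; ring
    have hsq : ⟪e₁, w⟫^2 + ⟪e₂, w⟫^2 = 1 := by rw [hin] at hww; nlinarith [hww]
    obtain ⟨θ, hcθ, hsθ⟩ := exists_angle hsq
    refine ⟨θ, ?_⟩
    have heq : nuv e₁ e₂ θ = w := by rw [nuv, hcθ, hsθ, ← hcoord]
    rw [heq]; exact hwmem
  set Θ : AffineSubspace ℝ (EuclideanSpace ℝ (Fin N)) → ℝ := fun Pl =>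
    if h : ∃ θ : ℝ, nuv e₁ e₂ θ ∈ Pl.directionᗮ then h.choose else 0 with hΘdef
  have hΘ : ∀ Pl ∈ S, nuv e₁ e₂ (Θ Pl) ∈ Pl.directionᗮ := by
    intro Pl hPl
    have h := hexθ Pl hPl
    simp only [hΘdef, dif_pos h]
    exact h.choose_spec
  have hsign : ∀ Pl ∈ S, ∀ w w' : EuclideanSpace ℝ (Fin N), w ∈ Pl.directionᗮ → ‖w‖ = 1 →
      w' ∈ Pl.directionᗮ → ‖w'‖ = 1 → w' = w ∨ w' = -w := by
    intro Pl hPl w w' hw hwn hw' hw'n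
    have hw0 : w ≠ 0 := by intro h; rw [h, norm_zero] at hwn; norm_num at hwn
    have hmem : w' ∈ Submodule.span ℝ {w} := (hspar Pl hPl w hw0 hw) ▸ hw'
    rw [Submodule.mem_span_singleton] at hmem
    obtain ⟨c, hc⟩ := hmem
    have hcn : |c| = 1 := by
      have hnc := congrArg norm hc
      rw [norm_smul, hwn, mul_one, hw'n, Real.norm_eq_abs] at hnc
      exact hnc
    rcases (abs_eq (by norm_num : (0:ℝ) ≤ 1)).1 hcn with h | h
    · left; rw [← hc, h, one_smul]
    · right; rw [← hc, h, neg_one_smul]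
  have heqPl : ∀ Pl ∈ S, ∀ Pl' ∈ S, ∀ w : EuclideanSpace ℝ (Fin N), w ≠ 0 →
      w ∈ Pl.directionᗮ → w ∈ Pl'.directionᗮ → Pl = Pl' := by
    intro Pl hPl Pl' hPl' w hw0 hw hw'
    have hdir : Pl.direction = Pl'.direction := by
      rw [← Submodule.orthogonal_orthogonal Pl.direction,
        ← Submodule.orthogonal_orthogonal Pl'.direction,
        hspar Pl hPl w hw0 hw, hspar Pl' hPl' w hw0 hw']
    exact AffineSubspace.ext_of_direction_eq hdir ⟨p₀, (hPfacts Pl hPl).2.2, (hPfacts Pl' hPl').2.2⟩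
  set p2 : ℝ := 2*π with hp2
  have hp2pos : 0 < p2 := by rw [hp2]; positivity
  have hcoeeq : ∀ x y : ℝ, (∃ z : ℤ, x - y = z * p2) → (x : AddCircle p2) = y := by
    rintro x y ⟨z, hz⟩
    have h0 : ((x - y : ℝ) : AddCircle p2) = 0 := by
      rw [AddCircle.coe_eq_zero_iff]; exact ⟨z, by rw [zsmul_eq_mul, hz]⟩
    have hsplit : ((x - y : ℝ) : AddCircle p2) = (x : AddCircle p2) - (y : AddCircle p2) := by
      norm_cast
    rw [hsplit] at h0
    exact sub_eq_zero.1 h0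
  have hcoeeq' : ∀ x y : ℝ, (x : AddCircle p2) = y → ∃ z : ℤ, x - y = z * p2 := by
    intro x y h
    have h0 : ((x - y : ℝ) : AddCircle p2) = 0 := by
      rw [show ((x - y : ℝ) : AddCircle p2) = (x : AddCircle p2) - (y : AddCircle p2) by norm_cast,
        h, sub_self]
    obtain ⟨z, hz⟩ := (AddCircle.coe_eq_zero_iff p2).1 h0
    exact ⟨z, by rw [← hz, zsmul_eq_mul]⟩
  set dA : AffineSubspace ℝ (EuclideanSpace ℝ (Fin N)) → AddCircle p2 := fun Pl =>
    ((2 * Θ Pl : ℝ) : AddCircle p2) with hdAdef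
  have hdA : ∀ Pl ∈ S, ∀ θ : ℝ, nuv e₁ e₂ θ ∈ Pl.directionᗮ →
      ((2*θ : ℝ) : AddCircle p2) = dA Pl := by
    intro Pl hPl θ hθ
    rcases hsign Pl hPl (nuv e₁ e₂ (Θ Pl)) (nuv e₁ e₂ θ) (hΘ Pl hPl) (hnunorm _) hθ (hnunorm _) with h | h
    · obtain ⟨z, hz⟩ := nuv_eq_iff e₁ e₂ h1 h2 h12 h
      exact hcoeeq _ _ ⟨2*z, by rw [hp2]; push_cast; linarith⟩
    · have h' : nuv e₁ e₂ θ = nuv e₁ e₂ (Θ Pl + π) := by rw [nuv_add_pi]; exact h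
      obtain ⟨z, hz⟩ := nuv_eq_iff e₁ e₂ h1 h2 h12 h'
      exact hcoeeq _ _ ⟨2*z+1, by rw [hp2]; push_cast; linarith⟩
  set A : Set (AddCircle p2) := dA '' S with hA
  have hdAinj : Set.InjOn dA S := by
    intro Pl hPl Pl' hPl' h
    obtain ⟨z, hz⟩ := hcoeeq' _ _ h
    have hθθ : Θ Pl = Θ Pl' + z * π := by rw [hp2] at hz; linarith
    have hnn : nuv e₁ e₂ (Θ Pl) = nuv e₁ e₂ (Θ Pl' + z * π) := by rw [hθθ]
    rcases nuv_add_int_pi e₁ e₂ (Θ Pl') z with h' | h'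
    · exact heqPl Pl hPl Pl' hPl' _ (hnune _) (hΘ Pl hPl) (by rw [hnn, h']; exact hΘ Pl' hPl')
    · exact heqPl Pl hPl Pl' hPl' _ (hnune _) (hΘ Pl hPl)
        (by rw [hnn, h']; exact Submodule.neg_mem _ (hΘ Pl' hPl'))
  have hAcard : A.ncard = m := by rw [hA, Set.ncard_image_of_injOn hdAinj, hcard]
  have hAfin : A.Finite := hSfin.image _
  obtain ⟨Pl₀, hPl₀⟩ := hSne
  have ha₀ : dA Pl₀ ∈ A := ⟨Pl₀, hPl₀, rfl⟩
  have hAcl : ∀ a ∈ A, ∀ b ∈ A, a + a - b ∈ A := by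
    rintro _ ⟨Pl, hPl, rfl⟩ _ ⟨Pl', hPl', rfl⟩
    obtain ⟨Pl'', hPl'', himg⟩ := hrefl Pl hPl Pl' hPl' p₀ (nuv e₁ e₂ (Θ Pl))
      (hPfacts Pl hPl).2.2 (hΘ Pl hPl) (hnunorm _)
    refine ⟨Pl'', hPl'', ?_⟩
    have hfun : ⇑(reflAff p₀ (nuv e₁ e₂ (Θ Pl))) = reflMap p₀ (nuv e₁ e₂ (Θ Pl)) := by
      funext x; rfl
    have hmapeq : Pl'' = AffineSubspace.map (reflAff p₀ (nuv e₁ e₂ (Θ Pl))) Pl' := by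
      apply SetLike.ext'
      rw [AffineSubspace.coe_map, hfun, himg]
    have hdir'' : Pl''.direction =
        Submodule.map (reflLin (nuv e₁ e₂ (Θ Pl))) Pl'.direction := by
      rw [hmapeq, AffineSubspace.map_direction, reflAff_linear]
    have hnorm'' : nuv e₁ e₂ (2*(Θ Pl) - (Θ Pl') + π) ∈ Pl''.directionᗮ := by
      rw [hdir'', Submodule.mem_orthogonal]
      rintro u hu
      obtain ⟨v, hv, rfl⟩ := hu
      rw [← reflLin_nuv e₁ e₂ h1 h2 h12, reflLin_inner (hnunorm _)]
      exact (Submodule.mem_orthogonal Pl'.direction _).1 (hΘ Pl' hPl') v hv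
    have hval := hdA Pl'' hPl'' _ hnorm''
    rw [← hval]
    have hstep1 : ((2*(2*(Θ Pl) - (Θ Pl') + π) : ℝ) : AddCircle p2)
        = (((2*Θ Pl) + (2*Θ Pl) - (2*Θ Pl') : ℝ) : AddCircle p2) :=
      hcoeeq _ _ ⟨1, by rw [hp2]; ring⟩
    rw [hstep1]
    show _ = ((2 * Θ Pl : ℝ) : AddCircle p2) + ((2 * Θ Pl : ℝ) : AddCircle p2)
      - ((2 * Θ Pl' : ℝ) : AddCircle p2)
    norm_cast
  obtain ⟨hAeq, hXinj⟩ := circle_lemma hp2pos A hAfin hm hAcard ha₀ hAcl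
  have hfk : ∀ k : Fin m, ∃ Pl, Pl ∈ S ∧ dA Pl = dA Pl₀ + ((k * (p2/m) : ℝ) : AddCircle p2) := by
    intro k
    have hmem : dA Pl₀ + (((k:ℕ) * (p2/m) : ℝ) : AddCircle p2) ∈ A := by
      rw [hAeq]; exact ⟨k.val, k.isLt, rfl⟩
    obtain ⟨Pl, hPl, h⟩ := hmem
    exact ⟨Pl, hPl, h⟩
  choose f hfS hfdA using hfk
  have hfinj : Function.Injective f := by
    intro k k' h
    have h2' := hfdA k
    rw [h, hfdA k'] at h2'
    have h3 := hXinj (Set.mem_Iio.2 k.isLt) (Set.mem_Iio.2 k'.isLt) h2'.symm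
    exact Fin.ext h3
  have hfsurj : ∀ Pl ∈ S, ∃ k : Fin m, f k = Pl := by
    intro Pl hPl
    have hmem : dA Pl ∈ A := ⟨Pl, hPl, rfl⟩
    rw [hAeq] at hmem
    obtain ⟨k, hk, hkeq⟩ := hmem
    refine ⟨⟨k, hk⟩, ?_⟩
    apply hdAinj (hfS ⟨k, hk⟩) hPl
    rw [hfdA ⟨k, hk⟩]
    exact hkeq
  set θ₀ : ℝ := Θ Pl₀ with hθ₀
  have hnormk : ∀ k : Fin m, nuv e₁ e₂ (θ₀ + (k:ℕ) * π / m) ∈ (f k).directionᗮ := by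
    intro k
    have hm0 : (m:ℝ) ≠ 0 := Nat.cast_ne_zero.2 (by omega)
    have hdak : dA (f k) = ((2*(θ₀ + (k:ℕ) * π / m) : ℝ) : AddCircle p2) := by
      rw [hfdA k]
      have hsplit : ((2*(θ₀ + (k:ℕ)*π/m) : ℝ) : AddCircle p2)
          = ((2*θ₀ : ℝ) : AddCircle p2) + (((k:ℕ) * (p2/m) : ℝ) : AddCircle p2) := by
        rw [show (2*(θ₀ + (k:ℕ)*π/m) : ℝ) = 2*θ₀ + (k:ℕ)*(p2/m) by rw [hp2]; field_simp]
        norm_cast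
      rw [hsplit]
    have hdak2 : ((2 * Θ (f k) : ℝ) : AddCircle p2)
        = ((2*(θ₀ + (k:ℕ) * π / m) : ℝ) : AddCircle p2) := hdak
    obtain ⟨z, hz⟩ := hcoeeq' _ _ hdak2
    have hθeq : Θ (f k) = (θ₀ + (k:ℕ) * π / m) + z * π := by rw [hp2] at hz; linarith
    have h' : nuv e₁ e₂ (Θ (f k)) = nuv e₁ e₂ ((θ₀ + (k:ℕ)*π/m) + z*π) := by rw [hθeq]
    rcases nuv_add_int_pi e₁ e₂ (θ₀ + (k:ℕ)*π/m) z with hh | hh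
    · rw [← hh, ← h']; exact hΘ _ (hfS k)
    · have hneg : nuv e₁ e₂ (θ₀ + (k:ℕ)*π/m) = - nuv e₁ e₂ (Θ (f k)) := by
        rw [h', hh, neg_neg]
      rw [hneg]; exact Submodule.neg_mem _ (hΘ _ (hfS k))
  refine ⟨?_, e₁, e₂, θ₀, f, h1, h2, h12, hmem1, hmem2, hfinj, hfS, fun k => by
    simpa [nuv] using hnormk k⟩
  -- PART 1: connected components
  have hmnat : m ≠ 0 := by omega
  have hm0 : (m:ℝ) ≠ 0 := Nat.cast_ne_zero.2 hmnat
  have hmpos : (0:ℝ) < m := by positivity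
  have hπ0 : (0:ℝ) < π := Real.pi_pos
  set ψ : ℕ → ℝ := fun j => θ₀ + j * π / m with hψ
  set G : EuclideanSpace ℝ (Fin N) → ℕ → ℝ :=
    fun x j => ⟪nuv e₁ e₂ (ψ j), x - p₀⟫ with hGdef
  have hplane : ∀ (k : Fin m) (x : EuclideanSpace ℝ (Fin N)), x ∈ f k ↔ G x (k:ℕ) = 0 := by
    intro k x
    have hp0k : p₀ ∈ f k := (hPfacts _ (hfS k)).2.2
    have hdir : (f k).direction = (Submodule.span ℝ {nuv e₁ e₂ (ψ (k:ℕ))})ᗮ := by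
      rw [← Submodule.orthogonal_orthogonal (f k).direction,
        hspar _ (hfS k) _ (hnune _) (hnormk k)]
    rw [← AffineSubspace.vsub_right_mem_direction_iff_mem hp0k x, hdir,
      Submodule.mem_orthogonal_singleton_iff_inner_right, vsub_eq_sub]
  have hUnion : ∀ x : EuclideanSpace ℝ (Fin N),
      (x ∈ ⋃ Pl ∈ S, (Pl : Set (EuclideanSpace ℝ (Fin N)))) ↔ ∃ k : Fin m, G x (k:ℕ) = 0 := by
    intro x
    rw [Set.mem_iUnion₂]
    constructor
    · rintro ⟨Pl, hPl, hx⟩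
      obtain ⟨k, rfl⟩ := hfsurj Pl hPl
      exact ⟨k, (hplane k x).1 hx⟩
    · rintro ⟨k, hk⟩
      exact ⟨f k, hfS k, (hplane k x).2 hk⟩
  have hGcoord : ∀ x j, G x j = Real.cos (ψ j) * ⟪e₁, x - p₀⟫ + Real.sin (ψ j) * ⟪e₂, x - p₀⟫ := by
    intro x j
    simp only [hGdef]
    exact nuv_inner_left e₁ e₂ (x - p₀) (ψ j)
  -- the key analytic reduction
  have hkey : ∀ x : EuclideanSpace ℝ (Fin N), ¬(⟪e₁, x - p₀⟫ = 0 ∧ ⟪e₂, x - p₀⟫ = 0) →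
      ∃ u : ℝ,
        (∀ j : ℕ, ((G x j < 0 ∧ 0 < G x (j+1)) ↔
          ∃ t : ℤ, 2*(m:ℝ)*t < u - j ∧ u - j < 2*(m:ℝ)*t + 1)) ∧
        (∀ k : ℕ, (G x k = 0 ↔ ∃ z : ℤ, u - k = z * m)) := by
    intro x hne
    obtain ⟨r, α, hr, hc1, hc2⟩ := exists_polar hne
    set u : ℝ := (α - θ₀ - π/2) * m / π with hu
    have hGu : ∀ j : ℕ, G x j = -r * Real.sin ((u - j) * π / m) := by
      intro j
      rw [hGcoord, ← hc1, ← hc2,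
        show Real.cos (ψ j) * (r * Real.cos α) + Real.sin (ψ j) * (r * Real.sin α)
          = r * Real.cos (α - ψ j) by rw [Real.cos_sub]; ring,
        show α - ψ j = (u - j)*π/m + π/2 by rw [hu, hψ]; field_simp; ring,
        Real.cos_add_pi_div_two]
      ring
    refine ⟨u, ?_, ?_⟩
    · intro j
      have hiff1 : G x j < 0 ↔ 0 < Real.sin ((u - j) * π / m) := by
        rw [hGu j]
        constructor <;> intro h <;> nlinarith
      have hiff2 : 0 < G x (j+1) ↔ Real.sin ((u - j - 1) * π / m) < 0 := by
        rw [hGu (j+1), show ((j+1:ℕ):ℝ) = (j:ℝ)+1 by push_cast; ring,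
          show u - ((j:ℝ)+1) = u - j - 1 by ring]
        constructor <;> intro h <;> nlinarith
      rw [hiff1, hiff2]
      exact sector_core hm u (j:ℝ)
    · intro k
      rw [hGu k]
      constructor
      · intro h
        have hs : Real.sin ((u - k) * π / m) = 0 := by
          rcases mul_eq_zero.1 h with h' | h'
          · exfalso; nlinarith
          · exact h'
        obtain ⟨n, hn⟩ := Real.sin_eq_zero_iff.1 hs
        refine ⟨n, ?_⟩
        have : (n:ℝ) * π * m = (u - k) * π := by
          rw [show (u-(k:ℝ)) * π = ((u-k) * π / m) * m by field_simp, ← hn]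
        have hπne : π ≠ 0 := ne_of_gt hπ0
        field_simp at this ⊢
        nlinarith [this]
      · rintro ⟨z, hz⟩
        rw [show (u - (k:ℝ)) * π / m = z * π by rw [hz]; field_simp, Real.sin_int_mul_pi]
        ring
  set T : ℕ → Set (EuclideanSpace ℝ (Fin N)) :=
    fun j => {x | G x j < 0 ∧ 0 < G x (j+1)} with hTdef
  have hTmem : ∀ j x, x ∈ T j ↔ (G x j < 0 ∧ 0 < G x (j+1)) := by
    intro j x; simp only [hTdef, Set.mem_setOf_eq]
  -- T j avoids all hyperplanes
  have hTsub : ∀ j : ℕ, ∀ x ∈ T j, ∀ k : Fin m, G x (k:ℕ) ≠ 0 := by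
    intro j x hx
    rw [hTmem] at hx
    have hne : ¬(⟪e₁, x - p₀⟫ = 0 ∧ ⟪e₂, x - p₀⟫ = 0) := by
      rintro ⟨hh1, hh2⟩
      have h0 : G x j = 0 := by rw [hGcoord, hh1, hh2]; ring
      linarith [hx.1]
    obtain ⟨u, hTiff, hZiff⟩ := hkey x hne
    obtain ⟨t, ht1, ht2⟩ := (hTiff j).1 hx
    intro k hk
    obtain ⟨z, hz⟩ := (hZiff (k:ℕ)).1 hk
    have huz : u = ((k:ℕ):ℝ) + (z:ℝ)*(m:ℝ) := by linarith
    have hint1 : ((2*(m:ℤ)*t : ℤ):ℝ) < (((k:ℕ):ℤ) + z*m - j : ℤ) := by push_cast; linarith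
    have hint2 : ((((k:ℕ):ℤ) + z*m - j : ℤ):ℝ) < ((2*(m:ℤ)*t + 1 : ℤ):ℝ) := by push_cast; linarith
    have h1' : (2*(m:ℤ)*t : ℤ) < (((k:ℕ):ℤ) + z*m - j : ℤ) := by exact_mod_cast hint1
    have h2' : (((k:ℕ):ℤ) + z*m - j : ℤ) < (2*(m:ℤ)*t + 1 : ℤ) := by exact_mod_cast hint2
    omega
  -- unique sector for points off the hyperplanes
  have hUidx : ∀ x : EuclideanSpace ℝ (Fin N), (∀ k : Fin m, G x (k:ℕ) ≠ 0) →
      ∃! j : ℕ, j < 2*m ∧ x ∈ T j := by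
    intro x hxU
    have hne : ¬(⟪e₁, x - p₀⟫ = 0 ∧ ⟪e₂, x - p₀⟫ = 0) := by
      rintro ⟨hh1, hh2⟩
      apply hxU ⟨0, by omega⟩
      rw [hGcoord, hh1, hh2]; ring
    obtain ⟨u, hTiff, hZiff⟩ := hkey x hne
    have hu_ne : ∀ z : ℤ, u ≠ z := by
      intro z hz
      have hk0 : 0 ≤ z % m := Int.emod_nonneg z (by exact_mod_cast hmnat)
      have hklt : z % m < m := Int.emod_lt_of_pos z (by exact_mod_cast Nat.pos_of_ne_zero hmnat)
      have hkm : (z % m).toNat < m := by omega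
      apply hxU ⟨(z % m).toNat, hkm⟩
      apply (hZiff _).2
      refine ⟨z / m, ?_⟩
      have hzd := Int.emod_add_mul_ediv z (m:ℤ)
      have hzdR : ((z % (m:ℤ) : ℤ):ℝ) + (m:ℝ) * ((z / (m:ℤ) : ℤ):ℝ) = (z:ℝ) := by
        exact_mod_cast hzd
      have hth : ((z:ℝ)) - ((z % (m:ℤ)).toNat : ℝ) = ((z / (m:ℤ) : ℤ):ℝ) * (m:ℝ) := by
        rw [show (((z % (m:ℤ)).toNat : ℕ) : ℝ) = ((z % (m:ℤ) : ℤ) : ℝ) by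
          exact_mod_cast Int.toNat_of_nonneg hk0]
        linarith
      rw [hz]
      exact hth
    obtain ⟨j, ⟨hjlt, hjsec⟩, hjun⟩ := unique_sector hm u hu_ne
    refine ⟨j, ⟨hjlt, (hTmem j x).2 ((hTiff j).2 hjsec)⟩, ?_⟩
    rintro j' ⟨hj'lt, hj'sec⟩
    exact hjun j' ⟨hj'lt, (hTiff j').1 ((hTmem j' x).1 hj'sec)⟩
  -- openness and convexity of sectors
  have hTrw : ∀ j : ℕ, T j = {x | ⟪nuv e₁ e₂ (ψ j), x⟫ < ⟪nuv e₁ e₂ (ψ j), p₀⟫} ∩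
      {x | ⟪nuv e₁ e₂ (ψ (j+1)), p₀⟫ < ⟪nuv e₁ e₂ (ψ (j+1)), x⟫} := by
    intro j
    ext x
    rw [hTmem]
    simp only [Set.mem_inter_iff, Set.mem_setOf_eq, hGdef]
    rw [inner_sub_right, inner_sub_right]
    constructor
    · rintro ⟨u1, u2⟩; exact ⟨by linarith, by linarith⟩
    · rintro ⟨u1, u2⟩; exact ⟨by linarith, by linarith⟩
  have hTopen : ∀ j : ℕ, IsOpen (T j) := by
    intro j
    rw [hTrw]
    have hcont : ∀ c : EuclideanSpace ℝ (Fin N),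
        Continuous (fun x : EuclideanSpace ℝ (Fin N) => ⟪c, x⟫) :=
      fun c => Continuous.inner continuous_const continuous_id
    exact IsOpen.inter (isOpen_lt (hcont _) continuous_const)
      (isOpen_lt continuous_const (hcont _))
  have hTconv : ∀ j : ℕ, Convex ℝ (T j) := by
    intro j
    rw [hTrw]
    have hlin : ∀ c : EuclideanSpace ℝ (Fin N),
        IsLinearMap ℝ (fun x : EuclideanSpace ℝ (Fin N) => ⟪c, x⟫) :=
      fun c => ⟨fun y z => inner_add_right c y z, fun t y => real_inner_smul_right c y t⟩
    exact Convex.inter (convex_halfSpace_lt (hlin _) _) (convex_halfSpace_gt (hlin _) _)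
  -- nonemptiness of sectors
  have hTne : ∀ j : ℕ, (p₀ + nuv e₁ e₂ (ψ j + π/2 + π/(2*m))) ∈ T j := by
    intro j
    have hxk : ∀ k : ℕ, G (p₀ + nuv e₁ e₂ (ψ j + π/2 + π/(2*m))) k
        = Real.cos (ψ k - (ψ j + π/2 + π/(2*m))) := by
      intro k
      simp only [hGdef]
      rw [show p₀ + nuv e₁ e₂ (ψ j + π/2 + π/(2*m)) - p₀ = nuv e₁ e₂ (ψ j + π/2 + π/(2*m)) by
        abel, nuv_inner e₁ e₂ h1 h2 h12]
    have hsinpos : 0 < Real.sin (π/(2*m)) := by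
      apply Real.sin_pos_of_pos_of_lt_pi
      · positivity
      · rw [div_lt_iff₀ (by positivity)]
        have hm1 : (1:ℝ) ≤ m := by exact_mod_cast hm
        nlinarith [hπ0, hm1]
    rw [hTmem]
    constructor
    · rw [hxk j, show ψ j - (ψ j + π/2 + π/(2*m)) = -(π/(2*m) + π/2) by ring, Real.cos_neg,
        Real.cos_add_pi_div_two]
      linarith
    · rw [hxk (j+1), show ψ (j+1) - (ψ j + π/2 + π/(2*m)) = -(π/2 - π/(2*m)) by
        rw [hψ]; push_cast; field_simp; ring, Real.cos_neg, Real.cos_pi_div_two_sub]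
      exact hsinpos
  -- the indexing map on the complement
  have hgex : ∀ x : {x : EuclideanSpace ℝ (Fin N) //
      x ∉ ⋃ Pl ∈ S, (Pl : Set (EuclideanSpace ℝ (Fin N)))}, ∃! j : ℕ, j < 2*m ∧ (x : EuclideanSpace ℝ (Fin N)) ∈ T j := by
    intro x
    apply hUidx
    intro k hk
    exact x.2 ((hUnion _).2 ⟨k, hk⟩)
  choose g hg hgu using hgex
  set g' : {x : EuclideanSpace ℝ (Fin N) //
      x ∉ ⋃ Pl ∈ S, (Pl : Set (EuclideanSpace ℝ (Fin N)))} → Fin (2*m) :=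
    fun x => ⟨g x, (hg x).1⟩ with hg'def
  have hg'spec : ∀ x (j : Fin (2*m)), g' x = j ↔ (x : EuclideanSpace ℝ (Fin N)) ∈ T (j:ℕ) := by
    intro x j
    constructor
    · intro h
      have := (hg x).2
      rwa [show (g x) = (j:ℕ) by rw [← h]] at this
    · intro h
      have := hgu x (j:ℕ) ⟨j.isLt, h⟩
      simp only [hg'def]
      exact Fin.ext this.symm
  have hcont : Continuous g' := by
    apply IsLocallyConstant.continuous
    intro s
    have heq : g' ⁻¹' s = ⋃ j ∈ s, Subtype.val ⁻¹' (T ((j : Fin (2*m)):ℕ)) := by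
      ext x
      simp only [Set.mem_preimage, Set.mem_iUnion₂]
      constructor
      · intro h
        exact ⟨g' x, h, (hg'spec x (g' x)).1 rfl⟩
      · rintro ⟨j, hj, hx⟩
        rwa [(hg'spec x j).2 hx]
    rw [heq]
    exact isOpen_biUnion fun j _ => (hTopen _).preimage continuous_subtype_val
  have hsur : Function.Surjective hcont.connectedComponentsLift := by
    intro j
    set xj := p₀ + nuv e₁ e₂ (ψ (j:ℕ) + π/2 + π/(2*m)) with hxj
    have hxjT : xj ∈ T (j:ℕ) := hTne (j:ℕ)
    have hxjU : xj ∉ ⋃ Pl ∈ S, (Pl : Set (EuclideanSpace ℝ (Fin N))) := by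
      intro hmem
      obtain ⟨k, hk⟩ := (hUnion _).1 hmem
      exact hTsub (j:ℕ) xj hxjT k hk
    refine ⟨ConnectedComponents.mk ⟨xj, hxjU⟩, ?_⟩
    rw [Continuous.connectedComponentsLift_apply_coe]
    exact (hg'spec ⟨xj, hxjU⟩ j).2 hxjT
  have hinj : Function.Injective hcont.connectedComponentsLift := by
    intro C C'
    obtain ⟨x, rfl⟩ := ConnectedComponents.surjective_coe C
    obtain ⟨x', rfl⟩ := ConnectedComponents.surjective_coe C'
    intro h
    rw [Continuous.connectedComponentsLift_apply_coe,
      Continuous.connectedComponentsLift_apply_coe] at h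
    have hxT : (x : EuclideanSpace ℝ (Fin N)) ∈ T ((g' x : Fin (2*m)):ℕ) :=
      (hg'spec x (g' x)).1 rfl
    have hx'T : (x' : EuclideanSpace ℝ (Fin N)) ∈ T ((g' x : Fin (2*m)):ℕ) := by
      have := (hg'spec x' (g' x')).1 rfl
      rwa [← h] at this
    set P : Set {x : EuclideanSpace ℝ (Fin N) //
        x ∉ ⋃ Pl ∈ S, (Pl : Set (EuclideanSpace ℝ (Fin N)))} :=
      Subtype.val ⁻¹' (T ((g' x : Fin (2*m)):ℕ)) with hPdef
    have hPimg : Subtype.val '' P = T ((g' x : Fin (2*m)):ℕ) := by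
      rw [hPdef, Set.image_preimage_eq_inter_range, Subtype.range_coe_subtype]
      apply Set.inter_eq_left.2
      intro y hy
      simp only [Set.mem_setOf_eq]
      intro hmem
      obtain ⟨k, hk⟩ := (hUnion _).1 hmem
      exact hTsub _ y hy k hk
    have hPconn : IsPreconnected P := by
      have hTp : IsPreconnected (Subtype.val '' P) := by
        rw [hPimg]
        exact (hTconv _).isPreconnected
      exact (Topology.IsInducing.subtypeVal.isPreconnected_image).1 hTp
    apply ConnectedComponents.coe_eq_coe.2
    have hsubC := hPconn.subset_connectedComponent (x := x) hxT
    exact connectedComponent_eq (hsubC hx'T)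
  have hcard2m : Nat.card (ConnectedComponents
      {x : EuclideanSpace ℝ (Fin N) //
        x ∉ ⋃ Pl ∈ S, (Pl : Set (EuclideanSpace ℝ (Fin N)))}) = 2 * m := by
    rw [Nat.card_eq_of_bijective _ ⟨hinj, hsur⟩, Nat.card_eq_fintype_card, Fintype.card_fin]
  exact hcard2m
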